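/- arXiv:1701.03207 — 2 statements merged into one kernel-verified Lean document; each statement's English description precedes it below -/
import Mathlib

section
/- Suppose v ∈ ℝ³ and there exists an auxiliary random variable U such that I(X,Y;U) ≤ v_{XY}, H(X|U) ≤ H(X) − v_X, H(Y|U) ≤ H(Y) − v_Y, H(X|Y,U) ≤ H(X|Y) − v_{XY} + v_Y, and H(Y|X,U) ≤ H(Y|X) − v_{XY} + v_X. Then necessarily v_X = I(X;U), v_Y = I(Y;U) and v_{XY} = I(X,Y;U); in particular v ∈ 𝓘_{XY}. -/
open scoped BigOperators Pointwise Classical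

noncomputable section

namespace GW

/-- A probability mass function on a finite type. -/
def IsPMF {α : Type} [Fintype α] (p : α → ℝ) : Prop :=
  (∀ a, 0 ≤ p a) ∧ ∑ a, p a = 1

/-- Distribution (pmf) of the random variable `f` under the pmf `p`. -/
def dist {α β : Type} [Fintype α] (p : α → ℝ) (f : α → β) : β → ℝ :=
  fun b => ∑ a, if f a = b then p a else 0

/-- Shannon entropy (base 2) of the random variable `f` under the pmf `p`. -/
def H {α β : Type} [Fintype α] [Fintype β] (p : α → ℝ) (f : α → β) : ℝ :=
  ∑ b, -(dist p f b * Real.logb 2 (dist p f b))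

/-- Mutual information `I(f; g)` under `p`. -/
def I2 {α β γ : Type} [Fintype α] [Fintype β] [Fintype γ]
    (p : α → ℝ) (f : α → β) (g : α → γ) : ℝ :=
  H p f + H p g - H p (fun a => (f a, g a))

/-- Conditional entropy `H(f | g)` under `p`. -/
def Hc {α β γ : Type} [Fintype α] [Fintype β] [Fintype γ]
    (p : α → ℝ) (f : α → β) (g : α → γ) : ℝ :=
  H p (fun a => (f a, g a)) - H p g

/-- Conditional mutual information `I(f; g | h)` under `p`. -/
def Ic {α β γ δ : Type} [Fintype α] [Fintype β] [Fintype γ] [Fintype δ]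
    (p : α → ℝ) (f : α → β) (g : α → γ) (h : α → δ) : ℝ :=
  Hc p f h + Hc p g h - Hc p (fun a => (f a, g a)) h

/-- Independence of the random variables `f` and `g` under `p`. -/
def Indep {α β γ : Type} [Fintype α] (p : α → ℝ) (f : α → β) (g : α → γ) : Prop :=
  ∀ b c, dist p (fun a => (f a, g a)) (b, c) = dist p f b * dist p g c

/-- `q` is a joint pmf on `X × Y × U` whose `(X,Y)`-marginal is `p`; i.e. `U` is an
auxiliary random variable defined jointly with `(X,Y)` via a conditional pmf `p_{U|XY}`. -/
def IsAux {X Y U : Type} [Fintype X] [Fintype Y] [Fintype U]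
    (p : X × Y → ℝ) (q : X × Y × U → ℝ) : Prop :=
  IsPMF q ∧ ∀ x y, (∑ u, q (x, y, u)) = p (x, y)

/-- Coordinate map onto `X`. -/
def cX {X Y U : Type} : X × Y × U → X := fun a => a.1
/-- Coordinate map onto `Y`. -/
def cY {X Y U : Type} : X × Y × U → Y := fun a => a.2.1
/-- Coordinate map onto `U`. -/
def cU {X Y U : Type} : X × Y × U → U := fun a => a.2.2
/-- Coordinate map onto `X × Y`. -/
def cXY {X Y U : Type} : X × Y × U → X × Y := fun a => (a.1, a.2.1)

/-- The mutual information region `𝓘_{XY}`. -/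
def MIRegion {X Y : Type} [Fintype X] [Fintype Y] (p : X × Y → ℝ) : Set (ℝ × ℝ × ℝ) :=
  { v | ∃ (U : Type) (_ : Fintype U) (q : X × Y × U → ℝ), IsAux p q ∧
      v = (I2 q cX cU, I2 q cY cU, I2 q cXY cU) }

/-- The outer region `𝓘ᵒ_{XY}`. -/
def OuterRegion {X Y : Type} [Fintype X] [Fintype Y] (p : X × Y → ℝ) : Set (ℝ × ℝ × ℝ) :=
  { v | 0 ≤ v.1 ∧ 0 ≤ v.2.1 ∧ v.1 + v.2.1 - v.2.2 ≤ I2 p Prod.fst Prod.snd ∧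
        0 ≤ v.2.2 - v.2.1 ∧ v.2.2 - v.2.1 ≤ Hc p Prod.fst Prod.snd ∧
        0 ≤ v.2.2 - v.1 ∧ v.2.2 - v.1 ≤ Hc p Prod.snd Prod.fst }

/-- Maximal interaction information `G_NNI(X; Y)`. -/
def GNNI {X Y : Type} [Fintype X] [Fintype Y] (p : X × Y → ℝ) : ℝ :=
  sSup { r | ∃ (U : Type) (_ : Fintype U) (q : X × Y × U → ℝ), IsAux p q ∧
      r = Ic q cX cY cU - I2 p Prod.fst Prod.snd }

/-- Asymmetric private interaction information `G_PNI(X → Y)`. -/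
def GPNI {X Y : Type} [Fintype X] [Fintype Y] (p : X × Y → ℝ) : ℝ :=
  sSup { r | ∃ (U : Type) (_ : Fintype U) (q : X × Y × U → ℝ), IsAux p q ∧
      Indep q cU cX ∧ r = Ic q cX cY cU - I2 p Prod.fst Prod.snd }

/-- Symmetric private interaction information `G_PPI(X; Y)`. -/
def GPPI {X Y : Type} [Fintype X] [Fintype Y] (p : X × Y → ℝ) : ℝ :=
  sSup { r | ∃ (U : Type) (_ : Fintype U) (q : X × Y × U → ℝ), IsAux p q ∧
      Indep q cU cX ∧ Indep q cU cY ∧ r = Ic q cX cY cU - I2 p Prod.fst Prod.snd }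

/-!
Since the `(X,Y)`-marginal of `q` is `p`, every entropy of `X`, `Y` or `(X,Y)` may be computed
under `q`, and the five hypotheses become linear inequalities between entropies of `(X,Y,U)`.
The first two say `v_X ≤ I(X;U)` and `v_Y ≤ I(Y;U)`. By the chain rule
`I(X,Y;U) = I(Y;U) + I(X;U|Y)`, the fourth gives `v_XY - v_Y ≤ I(X,Y;U) - I(Y;U)`, hence
`v_XY ≤ I(X,Y;U)`; together with the reverse bound `I(X,Y;U) ≤ v_XY` this forces equality
everywhere, and the fifth inequality then pins down `v_X` symmetrically.
-/

lemma dist_comp {α β γ : Type} [Fintype α] [Fintype β] (p : α → ℝ) (f : α → β) (g : β → γ) :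
    dist p (fun a => g (f a)) = dist (dist p f) g := by
  funext c
  simp only [dist, Finset.ite_sum_zero]
  rw [Finset.sum_comm]
  refine Finset.sum_congr rfl fun a _ => ?_
  rw [Fintype.sum_eq_single (f a) fun b hb => by simp [Ne.symm hb]]
  simp

lemma H_comp {α β γ : Type} [Fintype α] [Fintype β] [Fintype γ] (p : α → ℝ) (f : α → β)
    (g : β → γ) : H p (fun a => g (f a)) = H (dist p f) g := by
  simp only [H, dist_comp]

lemma H_comp_of_injective {α β γ : Type} [Fintype α] [Fintype β] [Fintype γ] (p : α → ℝ)
    (f : α → β) {e : β → γ} (he : Function.Injective e) :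
    H p (fun a => e (f a)) = H p f := by
  have hdist : ∀ b, dist p (fun a => e (f a)) (e b) = dist p f b := fun b =>
    Finset.sum_congr rfl fun a _ => by simp only [he.eq_iff]
  have hzero : ∀ c ∉ Set.range e, dist p (fun a => e (f a)) c = 0 := fun c hc =>
    Finset.sum_eq_zero fun a _ => if_neg fun h => hc ⟨f a, h⟩
  exact (Fintype.sum_of_injective e he _ _ (fun c hc => by simp [hzero c hc])
    fun b => by rw [hdist]).symm

lemma IsAux.dist_cXY {X Y U : Type} [Fintype X] [Fintype Y] [Fintype U] {p : X × Y → ℝ}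
    {q : X × Y × U → ℝ} (hq : IsAux p q) : dist q cXY = p := by
  funext ⟨x, y⟩
  rw [← hq.2, dist, Fintype.sum_prod_type, Fintype.sum_eq_single x fun x' hx => by simp [cXY, hx],
    Fintype.sum_prod_type, Fintype.sum_eq_single y fun y' hy => by simp [cXY, hy]]
  simp [cXY]

lemma IsAux.H_comp_cXY {X Y U β : Type} [Fintype X] [Fintype Y] [Fintype U] [Fintype β]
    {p : X × Y → ℝ} {q : X × Y × U → ℝ} (hq : IsAux p q) (g : X × Y → β) :
    H q (fun a => g (cXY a)) = H p g := by
  rw [H_comp, hq.dist_cXY]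

theorem stmt0_general {X Y : Type} [Fintype X] [Fintype Y] (p : X × Y → ℝ)
    (v : ℝ × ℝ × ℝ) {U : Type} [Fintype U] (q : X × Y × U → ℝ) (hq : IsAux p q)
    (h0 : I2 q cXY cU ≤ v.2.2)
    (h1 : Hc q cX cU ≤ H p Prod.fst - v.1)
    (h2 : Hc q cY cU ≤ H p Prod.snd - v.2.1)
    (h3 : Hc q cX (fun a => (cY a, cU a)) ≤ Hc p Prod.fst Prod.snd - v.2.2 + v.2.1)
    (h4 : Hc q cY (fun a => (cX a, cU a)) ≤ Hc p Prod.snd Prod.fst - v.2.2 + v.1) :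
    v.1 = I2 q cX cU ∧ v.2.1 = I2 q cY cU ∧ v.2.2 = I2 q cXY cU ∧ v ∈ MIRegion p := by
  obtain ⟨v₁, v₂, v₃⟩ := v
  have hX : H q cX = H p Prod.fst := hq.H_comp_cXY Prod.fst
  have hY : H q cY = H p Prod.snd := hq.H_comp_cXY Prod.snd
  have hXY : H q cXY = H p (fun a => (a.1, a.2)) := hq.H_comp_cXY (fun a => (a.1, a.2))
  have hXY_U : H q (fun a => (cXY a, cU a)) = H q id :=
    H_comp_of_injective q id (e := fun a => ((a.1, a.2.1), a.2.2)) fun _ _ h => by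
      simp_all [Prod.ext_iff]
  have hX_YU : H q (fun a => (cX a, (cY a, cU a))) = H q id := rfl
  have hY_XU : H q (fun a => (cY a, (cX a, cU a))) = H q id :=
    H_comp_of_injective q id (e := fun a => (a.2.1, (a.1, a.2.2))) fun _ _ h => by
      simp_all [Prod.ext_iff]
  have hYX : H p (fun a => (a.2, a.1)) = H p (fun a => (a.1, a.2)) :=
    H_comp_of_injective p _ Prod.swap_injective
  simp only [Hc, I2] at h0 h1 h2 h3 h4
  have e₁ : v₁ = I2 q cX cU := by unfold I2; linarith
  have e₂ : v₂ = I2 q cY cU := by unfold I2; linarith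
  have e₃ : v₃ = I2 q cXY cU := by unfold I2; linarith
  exact ⟨e₁, e₂, e₃, U, inferInstance, q, hq, by rw [e₁, e₂, e₃]⟩

/-- if an auxiliary `U` witnesses the five EGW rate inequalities for `v`, then
`v = (I(X;U), I(Y;U), I(X,Y;U))`; in particular `v ∈ 𝓘_{XY}`. -/
theorem stmt0 {X Y : Type} [Fintype X] [Fintype Y] (p : X × Y → ℝ) (hp : IsPMF p)
    (v : ℝ × ℝ × ℝ) {U : Type} [Fintype U] (q : X × Y × U → ℝ) (hq : IsAux p q)
    (h0 : I2 q cXY cU ≤ v.2.2)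
    (h1 : Hc q cX cU ≤ H p Prod.fst - v.1)
    (h2 : Hc q cY cU ≤ H p Prod.snd - v.2.1)
    (h3 : Hc q cX (fun a => (cY a, cU a)) ≤ Hc p Prod.fst Prod.snd - v.2.2 + v.2.1)
    (h4 : Hc q cY (fun a => (cX a, cU a)) ≤ Hc p Prod.snd Prod.fst - v.2.2 + v.1) :
    v.1 = I2 q cX cU ∧ v.2.1 = I2 q cY cU ∧ v.2.2 = I2 q cXY cU ∧ v ∈ MIRegion p :=
  stmt0_general p v q hq h0 h1 h2 h3 h4

end GW
end
end

section
/- The mutual information region 𝓘_{XY} is a compact subset of ℝ³. -/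
open scoped BigOperators Pointwise Classical

noncomputable section

namespace GW

/-!
Write a joint pmf of `(X, Y, U)` as `mix c s`: `U = u` with probability `c u`, and `(X, Y)` given
`U = u` has pmf `s u`. For `g` a projection of `(X, Y)`, `I(g(X, Y); U)` equals
`H(∑ c u • s u; g) - ∑ c u * H(s u; g)`, so the three mutual informations depend on `(c, s)` only
through the convex combination `∑ c u • (s u, H(s u; X), H(s u; Y), H(s u; X, Y))` in a real vector
space of dimension `|X||Y| + 3`. By Carathéodory's theorem this combination needs at most
`|X||Y| + 4` terms, so every point of the region is attained with `U = Fin (|X||Y| + 4)`, and the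
region is the image of the compact set of such joint pmfs under a continuous map.
-/

lemma neg_mul_logb_two (x : ℝ) : -(x * Real.logb 2 x) = Real.negMulLog x / Real.log 2 := by
  rw [Real.negMulLog, Real.logb]
  ring

lemma neg_mul_logb_mul (x y : ℝ) :
    -(x * y * Real.logb 2 (x * y)) = y * -(x * Real.logb 2 x) + x * -(y * Real.logb 2 y) := by
  simp only [neg_mul_logb_two, Real.negMulLog_mul]
  ring

section Entropy

variable {α β γ : Type} [Fintype α]

lemma sum_dist [Fintype β] (p : α → ℝ) (f : α → β) : ∑ b, dist p f b = ∑ a, p a := by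
  unfold dist
  rw [Finset.sum_comm]
  simp

lemma continuous_dist (f : α → β) (b : β) : Continuous fun p : α → ℝ => dist p f b :=
  continuous_finsetSum _ fun a _ => by split_ifs <;> fun_prop

lemma continuous_H [Fintype β] (f : α → β) : Continuous fun p : α → ℝ => H p f := by
  simp only [H, neg_mul_logb_two]
  exact continuous_finsetSum _ fun b _ =>
    (Real.continuous_negMulLog.comp (continuous_dist f b)).div_const _

lemma continuous_I2 [Fintype β] [Fintype γ] (f : α → β) (g : α → γ) :
    Continuous fun p : α → ℝ => I2 p f g := by
  unfold I2
  exact ((continuous_H f).add (continuous_H g)).sub (continuous_H _)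

end Entropy

section Mixture

variable {X Y U Z : Type} [Fintype U]

lemma sum_triple [Fintype X] [Fintype Y] {M : Type} [AddCommMonoid M] (f : X × Y × U → M) :
    ∑ a, f a = ∑ xy : X × Y, ∑ u, f (xy.1, xy.2, u) := by
  rw [← (Equiv.prodAssoc X Y U).sum_comp, Fintype.sum_prod_type]
  rfl

def mix (c : U → ℝ) (s : U → X × Y → ℝ) : X × Y × U → ℝ :=
  fun a => c a.2.2 * s a.2.2 (a.1, a.2.1)

variable (c : U → ℝ) (s : U → X × Y → ℝ)

lemma sum_mix [Fintype X] [Fintype Y] : ∑ a, mix c s a = ∑ u, c u * ∑ xy, s u xy := by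
  rw [sum_triple, Finset.sum_comm]
  simp [mix, Finset.mul_sum]

lemma sum_mix_apply (x : X) (y : Y) : ∑ u, mix c s (x, y, u) = (∑ u, c u • s u) (x, y) := by
  simp [mix, Finset.sum_apply]

lemma dist_mix_cU [Fintype X] [Fintype Y] (hs : ∀ u, ∑ xy, s u xy = 1) (u : U) :
    dist (mix c s) cU u = c u := by
  rw [dist, sum_triple, Finset.sum_comm]
  simp [mix, cU, ← Finset.mul_sum, hs]

lemma dist_mix_pair [Fintype X] [Fintype Y] (g : X × Y → Z) (z : Z) (u : U) :
    dist (mix c s) (fun a => (g (cXY a), cU a)) (z, u) = c u * dist (s u) g z := by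
  rw [dist, dist, sum_triple, Finset.mul_sum]
  refine Finset.sum_congr rfl fun xy _ => ?_
  by_cases h : g xy = z <;> simp [mix, cU, cXY, h]

lemma dist_mix_comp [Fintype X] [Fintype Y] (g : X × Y → Z) (z : Z) :
    dist (mix c s) (fun a => g (cXY a)) z = dist (∑ u, c u • s u) g z := by
  rw [dist, sum_triple]
  simp [dist, mix, cXY, Finset.sum_apply]

lemma H_mix_pair [Fintype X] [Fintype Y] [Fintype Z] (hs : ∀ u, ∑ xy, s u xy = 1)
    (g : X × Y → Z) :
    H (mix c s) (fun a => (g (cXY a), cU a)) = H (mix c s) cU + ∑ u, c u * H (s u) g := by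
  simp only [H, Fintype.sum_prod_type, dist_mix_pair, dist_mix_cU c s hs, neg_mul_logb_mul]
  rw [Finset.sum_comm]
  simp only [Finset.sum_add_distrib, ← Finset.sum_mul, ← Finset.mul_sum, sum_dist, hs, one_mul]

lemma I2_mix [Fintype X] [Fintype Y] [Fintype Z] (hs : ∀ u, ∑ xy, s u xy = 1)
    (g : X × Y → Z) :
    I2 (mix c s) (fun a => g (cXY a)) cU = H (∑ u, c u • s u) g - ∑ u, c u * H (s u) g := by
  have hH : H (mix c s) (fun a => g (cXY a)) = H (∑ u, c u • s u) g := by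
    simp only [H, dist_mix_comp]
  rw [I2, H_mix_pair c s hs, hH]
  ring

lemma IsAux.isPMF [Fintype X] [Fintype Y] {p : X × Y → ℝ} {q : X × Y × U → ℝ}
    (h : IsAux p q) : IsPMF p := by
  obtain ⟨⟨hq₀, hq₁⟩, hmarg⟩ := h
  refine ⟨fun xy => ?_, ?_⟩
  · rw [← hmarg]
    exact Finset.sum_nonneg fun u _ => hq₀ _
  · rw [← hq₁, sum_triple]
    exact Finset.sum_congr rfl fun xy _ => (hmarg xy.1 xy.2).symm

lemma isAux_mix_iff [Fintype X] [Fintype Y] {p : X × Y → ℝ} {c : U → ℝ} {s : U → X × Y → ℝ}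
    (hc : ∀ u, 0 ≤ c u) (hs : ∀ u, IsPMF (s u)) :
    IsAux p (mix c s) ↔ ∑ u, c u = 1 ∧ ∑ u, c u • s u = p := by
  have hnonneg : ∀ a, 0 ≤ mix c s a := fun a => mul_nonneg (hc _) ((hs _).1 _)
  simp only [IsAux, IsPMF, hnonneg, sum_mix, (hs _).2, mul_one, sum_mix_apply, funext_iff,
    Prod.forall, implies_true, true_and]

end Mixture

lemma exists_eq_mix {X Y U : Type} [Fintype X] [Fintype Y] {ρ : X × Y → ℝ} (hρ : IsPMF ρ)
    {q : X × Y × U → ℝ} (hq : ∀ a, 0 ≤ q a) :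
    ∃ (c : U → ℝ) (s : U → X × Y → ℝ), (∀ u, 0 ≤ c u) ∧ (∀ u, IsPMF (s u)) ∧ q = mix c s := by
  set c : U → ℝ := fun u => ∑ xy : X × Y, q (xy.1, xy.2, u)
  have hc : ∀ u, 0 ≤ c u := fun u => Finset.sum_nonneg fun xy _ => hq _
  have hq_zero : ∀ u, c u = 0 → ∀ xy : X × Y, q (xy.1, xy.2, u) = 0 := fun u hu xy =>
    (Finset.sum_eq_zero_iff_of_nonneg fun xy _ => hq _).1 hu xy (Finset.mem_univ xy)
  refine ⟨c, fun u => if c u = 0 then ρ else fun xy => q (xy.1, xy.2, u) / c u, hc,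
    fun u => ?_, ?_⟩
  · by_cases hu : c u = 0
    · simpa [hu] using hρ
    · simp only [hu, if_false]
      exact ⟨fun xy => div_nonneg (hq _) (hc u), by rw [← Finset.sum_div, div_self hu]⟩
  · funext ⟨x, y, u⟩
    by_cases hu : c u = 0
    · simp [mix, hu, hq_zero u hu (x, y)]
    · simp [mix, hu, mul_div_cancel₀]

theorem exists_fin_sum_smul_eq {α E ι : Type*} [AddCommGroup E] [Module ℝ E]
    [FiniteDimensional ℝ E] [Fintype ι] (F : α → E) {S : Set α} {w : ι → ℝ} {z : ι → α}
    (hw₀ : ∀ i, 0 ≤ w i) (hw₁ : ∑ i, w i = 1) (hz : ∀ i, z i ∈ S) {n : ℕ}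
    (hn : Module.finrank ℝ E + 1 ≤ n) :
    ∃ (w' : Fin n → ℝ) (z' : Fin n → α), (∀ k, 0 ≤ w' k) ∧ ∑ k, w' k = 1 ∧ (∀ k, z' k ∈ S) ∧
      ∑ k, w' k • F (z' k) = ∑ i, w i • F (z i) := by
  have hmem : ∑ i, w i • F (z i) ∈ convexHull ℝ (F '' S) :=
    (convex_convexHull ℝ _).sum_mem (fun i _ => hw₀ i) hw₁ fun i _ =>
      subset_convexHull ℝ _ (Set.mem_image_of_mem F (hz i))
  obtain ⟨κ, _, y, v, hyS, hindep, hv₀, hv₁, hvy⟩ := eq_pos_convex_span_of_mem_convexHull hmem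
  choose σ hσS hσ using fun k => hyS (Set.mem_range_self k)
  have hcard : Fintype.card κ ≤ Fintype.card (Fin n) := by
    calc Fintype.card κ ≤ Module.finrank ℝ (vectorSpan ℝ (Set.range y)) + 1 :=
          hindep.card_le_finrank_succ
      _ ≤ n := le_trans (Nat.add_le_add_right (Submodule.finrank_le _) 1) hn
      _ = Fintype.card (Fin n) := (Fintype.card_fin n).symm
  obtain ⟨j⟩ := Function.Embedding.nonempty_of_card_le hcard
  obtain ⟨i₀⟩ : Nonempty ι := by
    by_contra h
    simp [not_nonempty_iff.mp h] at hw₁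
  refine ⟨Function.extend j v 0, Function.extend j σ fun _ => z i₀, fun k => ?_, ?_,
    fun k => ?_, ?_⟩
  · by_cases hk : ∃ i, j i = k
    · obtain ⟨i, rfl⟩ := hk
      simpa [j.injective.extend_apply] using (hv₀ i).le
    · simp [Function.extend_apply' _ _ _ hk]
  · rw [← hv₁]
    exact (Fintype.sum_of_injective j j.injective _ _
      (fun k hk => by simp [Function.extend_apply' _ _ _ hk])
      fun i => by simp [j.injective.extend_apply]).symm
  · by_cases hk : ∃ i, j i = k
    · obtain ⟨i, rfl⟩ := hk
      simpa [j.injective.extend_apply] using hσS i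
    · simpa [Function.extend_apply' _ _ _ hk] using hz i₀
  · rw [← hvy]
    exact (Fintype.sum_of_injective j j.injective _ _
      (fun k hk => by simp [Function.extend_apply' _ _ _ hk])
      fun i => by simp [j.injective.extend_apply, hσ]).symm

section Region

variable {X Y : Type} [Fintype X] [Fintype Y]

def entropyProfile (ρ : X × Y → ℝ) : (X × Y → ℝ) × ℝ × ℝ × ℝ :=
  (ρ, H ρ Prod.fst, H ρ Prod.snd, H ρ id)

def miTriple {U : Type} [Fintype U] (q : X × Y × U → ℝ) : ℝ × ℝ × ℝ :=
  (I2 q cX cU, I2 q cY cU, I2 q cXY cU)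

lemma continuous_miTriple {U : Type} [Fintype U] :
    Continuous (miTriple : (X × Y × U → ℝ) → ℝ × ℝ × ℝ) :=
  (continuous_I2 _ _).prodMk ((continuous_I2 _ _).prodMk (continuous_I2 _ _))

lemma isCompact_setOf_isAux {U : Type} [Fintype U] (p : X × Y → ℝ) :
    IsCompact {q : X × Y × U → ℝ | IsAux p q} := by
  have hclosed : IsClosed {q : X × Y × U → ℝ | ∀ x y, ∑ u, q (x, y, u) = p (x, y)} := by
    simp only [Set.ofPred_forall]
    exact isClosed_iInter fun x => isClosed_iInter fun y =>
      isClosed_eq (by fun_prop) continuous_const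
  exact (isCompact_stdSimplex ℝ _).inter_right hclosed

lemma finrank_entropyProfile_space :
    Module.finrank ℝ ((X × Y → ℝ) × ℝ × ℝ × ℝ) + 1 = Fintype.card (X × Y) + 4 := by
  simp [Module.finrank_prod]

lemma fst_sum_smul_entropyProfile {U : Type} [Fintype U] (c : U → ℝ) (s : U → X × Y → ℝ) :
    (∑ u, c u • entropyProfile (s u)).1 = ∑ u, c u • s u := by
  simp [entropyProfile, Prod.fst_sum]

lemma miTriple_mix_eq {U V : Type} [Fintype U] [Fintype V] {c : U → ℝ} {s : U → X × Y → ℝ}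
    {c' : V → ℝ} {s' : V → X × Y → ℝ} (hs : ∀ u, ∑ xy, s u xy = 1)
    (hs' : ∀ v, ∑ xy, s' v xy = 1)
    (h : ∑ u, c u • entropyProfile (s u) = ∑ v, c' v • entropyProfile (s' v)) :
    miTriple (mix c s) = miTriple (mix c' s') := by
  have hmean : ∑ u, c u • s u = ∑ v, c' v • s' v := by
    rw [← fst_sum_smul_entropyProfile, h, fst_sum_smul_entropyProfile]
  have hfst := congrArg (fun e => e.2.1) h
  have hsnd := congrArg (fun e => e.2.2.1) h
  have hid := congrArg (fun e => e.2.2.2) h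
  simp only [entropyProfile, Prod.snd_sum, Prod.fst_sum, Prod.smul_snd, Prod.smul_fst,
    smul_eq_mul] at hfst hsnd hid
  have hI2 : ∀ {Z : Type} [Fintype Z] (g : X × Y → Z),
      ∑ u, c u * H (s u) g = ∑ v, c' v * H (s' v) g →
      I2 (mix c s) (fun a => g (cXY a)) cU = I2 (mix c' s') (fun a => g (cXY a)) cU :=
    fun g hg => by rw [I2_mix c s hs, I2_mix c' s' hs', hmean, hg]
  exact Prod.ext (hI2 Prod.fst hfst) (Prod.ext (hI2 Prod.snd hsnd) (hI2 id hid))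

theorem exists_isAux_fin_miTriple_eq {U : Type} [Fintype U] {p : X × Y → ℝ}
    {q : X × Y × U → ℝ} (hq : IsAux p q) :
    ∃ q' : X × Y × Fin (Fintype.card (X × Y) + 4) → ℝ, IsAux p q' ∧ miTriple q' = miTriple q := by
  obtain ⟨c, s, hc, hs, rfl⟩ := exists_eq_mix hq.isPMF hq.1.1
  obtain ⟨hc₁, hmarg⟩ := (isAux_mix_iff hc hs).1 hq
  obtain ⟨c', s', hc', hc'₁, hs', heq⟩ := exists_fin_sum_smul_eq entropyProfile
    (S := {ρ | IsPMF ρ}) hc hc₁ hs finrank_entropyProfile_space.le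
  refine ⟨mix c' s', (isAux_mix_iff hc' hs').2 ⟨hc'₁, ?_⟩,
    miTriple_mix_eq (fun v => (hs' v).2) (fun u => (hs u).2) heq⟩
  rw [← fst_sum_smul_entropyProfile, heq, fst_sum_smul_entropyProfile, hmarg]

end Region

theorem stmt2_general {X Y : Type} [Fintype X] [Fintype Y] (p : X × Y → ℝ) :
    IsCompact (MIRegion p) := by
  have hregion : MIRegion p =
      miTriple '' {q : X × Y × Fin (Fintype.card (X × Y) + 4) → ℝ | IsAux p q} := by
    ext v
    constructor
    · rintro ⟨U, _, q, hq, rfl⟩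
      exact exists_isAux_fin_miTriple_eq hq
    · rintro ⟨q, hq, rfl⟩
      exact ⟨_, inferInstance, q, hq, rfl⟩
  rw [hregion]
  exact (isCompact_setOf_isAux p).image continuous_miTriple

/-- the mutual information region `𝓘_{XY}` is a compact subset of `ℝ³`. -/
theorem stmt2 {X Y : Type} [Fintype X] [Fintype Y] (p : X × Y → ℝ) (hp : IsPMF p) :
    IsCompact (MIRegion p) :=
  stmt2_general p

end GW
end
end
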